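/- arXiv:1109.2240 — 5 statements merged into one kernel-verified Lean document; each statement's English description precedes it below -/
import Mathlib

section
/- For every matrix A ∈ ℝ^{m×n}, the tropical rank of A equals the largest cardinality of a tropically independent family of rows of A. -/
noncomputable section

/-- The field of generalized power series over ℝ with complex coefficients. -/
abbrev K : Type := HahnSeries ℝ ℂ

open Classical in
/-- The degree of an element of `K`: the least exponent of its support, `⊤` for `0`. -/
noncomputable def Kdeg (a : K) : WithTop ℝ :=
  if a = 0 then ⊤ else ((HahnSeries.order a : ℝ) : WithTop ℝ)

/-- A square real matrix is tropically non-singular if the minimum in the tropical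
permanent is attained by exactly one permutation. -/
def TropNonsing {k : ℕ} (S : Matrix (Fin k) (Fin k) ℝ) : Prop :=
  ∃! σ : Equiv.Perm (Fin k), ∀ τ : Equiv.Perm (Fin k),
    (∑ i, S i (σ i)) ≤ ∑ i, S i (τ i)

/-- The tropical rank: the largest size of a tropically non-singular square submatrix. -/
noncomputable def tropRank {m n : ℕ} (A : Matrix (Fin m) (Fin n) ℝ) : ℕ :=
  sSup {r : ℕ | ∃ (ρ : Fin r → Fin m) (c : Fin r → Fin n),
    Function.Injective ρ ∧ Function.Injective c ∧ TropNonsing (A.submatrix ρ c)}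

/-- A matrix over `K` is a lift of a real matrix if degrees of entries match. -/
def IsLift {m n : ℕ} (F : Matrix (Fin m) (Fin n) K) (B : Matrix (Fin m) (Fin n) ℝ) : Prop :=
  ∀ i j, Kdeg (F i j) = (B i j : WithTop ℝ)

/-- The Kapranov rank: the smallest rank over `K` of a lift. -/
noncomputable def kapRank {m n : ℕ} (B : Matrix (Fin m) (Fin n) ℝ) : ℕ :=
  sInf {r : ℕ | ∃ F : Matrix (Fin m) (Fin n) K, IsLift F B ∧ F.rank = r}

/-- The tuple `lam` realizes the tropical dependence of the rows of `A`. -/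
def Realizes {m n : ℕ} (lam : Fin m → WithTop ℝ) (A : Matrix (Fin m) (Fin n) ℝ) : Prop :=
  (∃ τ, lam τ ≠ ⊤) ∧
  ∀ k : Fin n, ∃ τ₁ τ₂ : Fin m, τ₁ ≠ τ₂ ∧
    (∀ τ, lam τ₁ + (A τ₁ k : WithTop ℝ) ≤ lam τ + (A τ k : WithTop ℝ)) ∧
    (∀ τ, lam τ₂ + (A τ₂ k : WithTop ℝ) ≤ lam τ + (A τ k : WithTop ℝ))

open Classical in
/-- The pattern of a real matrix, with entries in `{0, ∞} ⊆ ℝ ∪ {∞}`. -/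
noncomputable def pat {m n : ℕ} (A : Matrix (Fin m) (Fin n) ℝ) (u : Fin m) (v : Fin n) :
    WithTop ℝ :=
  if ∀ i, A u v ≤ A i v then 0 else ⊤

/-- The support of the `j`-th column of the pattern of `A`. -/
def colSupp {m n : ℕ} (A : Matrix (Fin m) (Fin n) ℝ) (j : Fin n) : Set (Fin m) :=
  {u | ∀ i, A u j ≤ A i j}


/-!
A family of `r` real row vectors is tropically dependent iff some finite `x` lies on all the
tropical hyperplanes `{x | min_i (x i + a i k) is attained twice}` cut out by its columns.
For a square matrix this happens iff it is tropically singular: given such an `x`, rerouting an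
optimal permutation along a cycle of "second minimisers" does not raise its cost; conversely the
tropical cofactors along a column where two optimal permutations differ give such an `x`
(tropical Cramer rule). For `r` rows, a tropical Helly theorem (proved by a tropical Radon
argument with Cramer coefficients, using that tropical hyperplanes are tropically convex) reduces
the existence of a common point of all column hyperplanes to that of every `r` of them, i.e. to
the singularity of all `r × r` submatrices.
-/

open Finset Function
open scoped Matrix

section Hyperplanes

variable {ι κ α : Type*}

def MinAttainedTwice [LinearOrder α] (f : ι → α) : Prop :=
  ∃ i j, i ≠ j ∧ (∀ k, f i ≤ f k) ∧ ∀ k, f j ≤ f k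

theorem MinAttainedTwice.exists_ne [LinearOrder α] {f : ι → α} (h : MinAttainedTwice f) (k : ι) :
    ∃ i ≠ k, ∀ j, f i ≤ f j := by
  obtain ⟨i, j, hij, hi, hj⟩ := h
  by_cases hik : i = k
  · exact ⟨j, fun hjk => hij (hik.trans hjk.symm), hj⟩
  · exact ⟨i, hik, hi⟩

def tropHyperplane (w : ι → ℝ) : Set (ι → ℝ) :=
  {x | MinAttainedTwice (x + w)}

/-- Tropical dependence of the rows of `M`, with finite coefficients. -/
def TropDependent (M : Matrix ι κ ℝ) : Prop :=
  ∃ x : ι → ℝ, ∀ k, x ∈ tropHyperplane (Mᵀ k)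

theorem TropDependent.submatrix_cols {M : Matrix ι κ ℝ} (h : TropDependent M) {ν : Type*}
    (γ : ν → κ) : TropDependent (M.submatrix id γ) :=
  let ⟨x, hx⟩ := h
  ⟨x, fun k => hx (γ k)⟩

end Hyperplanes

section Cramer

variable {ι κ : Type*} [Fintype ι] [Fintype κ]

/-- Entry `t` is the tropical maximal minor of `X` with the column `t` deleted. -/
noncomputable def cramerVec (X : Matrix ι κ ℝ) (t : κ) : ℝ :=
  ⨅ φ : {φ : ι ↪ κ // t ∉ Set.range φ}, ∑ i, X i (φ.1 i)

theorem nonempty_embedding_avoiding (h : Fintype.card ι < Fintype.card κ) (t : κ) :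
    Nonempty {φ : ι ↪ κ // t ∉ Set.range φ} := by
  classical
  obtain ⟨φ⟩ := Function.Embedding.nonempty_of_card_le (α := ι) (β := {s // s ≠ t})
    (by rw [Fintype.card_subtype_compl, Fintype.card_subtype_eq]; omega)
  exact ⟨⟨φ.trans (Embedding.subtype _), fun ⟨i, hi⟩ => (φ i).2 hi⟩⟩

theorem cramerVec_le (X : Matrix ι κ ℝ) {t : κ} (φ : ι ↪ κ) (hφ : t ∉ Set.range φ) :
    cramerVec X t ≤ ∑ i, X i (φ i) :=
  ciInf_le (Set.finite_range _).bddBelow (⟨φ, hφ⟩ : {φ : ι ↪ κ // t ∉ Set.range φ})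

theorem exists_eq_cramerVec (X : Matrix ι κ ℝ) (h : Fintype.card ι < Fintype.card κ) (t : κ) :
    ∃ φ : ι ↪ κ, t ∉ Set.range φ ∧ ∑ i, X i (φ i) = cramerVec X t := by
  have := nonempty_embedding_avoiding h t
  obtain ⟨⟨φ, hφ⟩, heq⟩ := exists_eq_ciInf_of_finite
    (f := fun φ : {φ : ι ↪ κ // t ∉ Set.range φ} => ∑ i, X i (φ.1 i))
  exact ⟨φ, hφ, heq⟩

/-- Tropical Cramer rule. -/
theorem cramerVec_mem_tropHyperplane (X : Matrix ι κ ℝ) (h : Fintype.card ι < Fintype.card κ)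
    (i : ι) : cramerVec X ∈ tropHyperplane (X i) := by
  classical
  have : Nonempty κ := Fintype.card_pos_iff.mp (by omega)
  obtain ⟨t₀, ht₀⟩ := Finite.exists_min (cramerVec X + X i)
  obtain ⟨φ, hφt₀, hφ⟩ := exists_eq_cramerVec X h t₀
  have hne : φ i ≠ t₀ := fun he => hφt₀ ⟨i, he⟩
  -- Sending `i` to `t₀` instead of `φ i` shows that `φ i` is a second minimiser.
  let φ' : ι ↪ κ := φ.trans (Equiv.swap (φ i) t₀).toEmbedding
  have hφ' : φ i ∉ Set.range φ' := by
    rintro ⟨a, ha⟩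
    refine hφt₀ ⟨a, ?_⟩
    simpa [φ', Equiv.swap_apply_eq_iff] using ha
  have hfix : ∀ a ∈ univ.erase i, X a (φ' a) = X a (φ a) := fun a ha =>
    congrArg (X a) (Equiv.swap_apply_of_ne_of_ne (φ.injective.ne (ne_of_mem_erase ha))
      fun he => hφt₀ ⟨a, he⟩)
  have hsum : ∑ a, X a (φ' a) + X i (φ i) = ∑ a, X a (φ a) + X i t₀ := by
    rw [← add_sum_erase _ _ (mem_univ i), ← add_sum_erase _ _ (mem_univ i), sum_congr rfl hfix]
    simp only [φ', Embedding.trans_apply, Equiv.coe_toEmbedding, Equiv.swap_apply_left]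
    ring
  have hle : cramerVec X (φ i) + X i (φ i) ≤ cramerVec X t₀ + X i t₀ := by
    linarith [cramerVec_le X φ' hφ']
  exact ⟨t₀, φ i, hne.symm, ht₀, fun t => hle.trans (ht₀ t)⟩

end Cramer

section Helly

variable {ι κ τ : Type*}

/-- Tropical hyperplanes are tropically convex: `y = min_{s ∈ T} (c s + z s)` lies on one
if all the `z s` do. -/
theorem mem_tropHyperplane_of_eq_min [Finite ι] [Nonempty ι] {w : ι → ℝ} {T : Set τ}
    {c : τ → ℝ} {z : τ → ι → ℝ} {y : ι → ℝ} (hz : ∀ s ∈ T, z s ∈ tropHyperplane w)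
    (hle : ∀ s ∈ T, ∀ i, y i ≤ c s + z s i) (heq : ∀ i, ∃ s ∈ T, y i = c s + z s i) :
    y ∈ tropHyperplane w := by
  obtain ⟨j₀, hj₀⟩ := Finite.exists_min (y + w)
  obtain ⟨s, hs, hys⟩ := heq j₀
  obtain ⟨j₁, j₂, hne, h₁, h₂⟩ := hz s hs
  have hmin : ∀ j, (∀ i, (z s + w) j ≤ (z s + w) i) → ∀ i, (y + w) j ≤ (y + w) i := by
    intro j hj i
    calc (y + w) j ≤ c s + (z s + w) j := by
          simp only [Pi.add_apply]; linarith [hle s hs j]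
      _ ≤ c s + (z s + w) j₀ := by linarith [hj j₀]
      _ = (y + w) j₀ := by simp only [Pi.add_apply, hys]; ring
      _ ≤ (y + w) i := hj₀ i
  exact ⟨j₁, j₂, hne, hmin j₁ h₁, hmin j₂ h₂⟩

variable [Fintype ι] [Nonempty ι] [DecidableEq κ]

/-- Tropical Radon step: `card ι + 1` of the points `z s` have a tropical linear combination, with
Cramer coefficients, that is minimised twice in every coordinate, hence lies on all of `F`. -/
theorem exists_forall_mem_tropHyperplane_of_erase (w : κ → ι → ℝ) {F : Finset κ}
    (hF : Fintype.card ι < #F) (z : κ → ι → ℝ)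
    (hz : ∀ s ∈ F, ∀ k ∈ F.erase s, z s ∈ tropHyperplane (w k)) :
    ∃ x, ∀ k ∈ F, x ∈ tropHyperplane (w k) := by
  obtain ⟨W, hWF, hW⟩ := exists_subset_card_eq (Nat.succ_le_of_lt hF)
  let X : Matrix ι W ℝ := fun i s => z s i
  have hX : ∀ i, cramerVec X ∈ tropHyperplane (X i) := cramerVec_mem_tropHyperplane X
    (by rw [Fintype.card_coe, hW]; omega)
  choose s₁ s₂ hs hs₁ hs₂ using hX
  refine ⟨fun i => cramerVec X (s₁ i) + X i (s₁ i), fun k hk => ?_⟩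
  refine mem_tropHyperplane_of_eq_min (T := {s : W | s.1 ≠ k}) (c := cramerVec X)
    (z := fun s => z s) ?_ (fun s _ i => hs₁ i s) fun i => ?_
  · exact fun s hsk => hz s (hWF s.2) k (mem_erase.mpr ⟨Ne.symm hsk, hk⟩)
  · by_cases h : (s₁ i).1 = k
    · exact ⟨s₂ i, fun h' => hs i (Subtype.ext (h.trans h'.symm)), le_antisymm (hs₁ i _) (hs₂ i _)⟩
    · exact ⟨s₁ i, h, rfl⟩

/-- Tropical Helly theorem. -/
theorem exists_forall_mem_tropHyperplane (w : κ → ι → ℝ) (F : Finset κ)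
    (h : ∀ G ⊆ F, #G ≤ Fintype.card ι → ∃ x, ∀ k ∈ G, x ∈ tropHyperplane (w k)) :
    ∃ x, ∀ k ∈ F, x ∈ tropHyperplane (w k) := by
  induction F using Finset.strongInduction with
  | H F ih =>
    by_cases hF : #F ≤ Fintype.card ι
    · exact h F Subset.rfl hF
    have hz : ∀ s ∈ F, ∃ z, ∀ k ∈ F.erase s, z ∈ tropHyperplane (w k) := fun s hs =>
      ih _ (erase_ssubset hs) fun G hG => h G (hG.trans (erase_subset s F))
    choose! z hz using hz
    exact exists_forall_mem_tropHyperplane_of_erase w (not_le.mp hF) z hz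

end Helly

section Square

open Equiv

theorem exists_perm_apply_eq_or_eq {α : Type*} [Finite α] [Nonempty α] (g : α → α) :
    ∃ π : Perm α, (∃ x, π x = g x) ∧ ∀ x, π x = g x ∨ π x = x := by
  classical
  obtain ⟨x₀⟩ := ‹Nonempty α›
  have hper : ∃ x, x ∈ periodicPts g := by
    obtain ⟨m, n, hmn, heq⟩ := Finite.exists_ne_map_eq_of_infinite fun n : ℕ => g^[n] x₀
    wlog hlt : m < n generalizing m n
    · exact this n m hmn.symm heq.symm (by omega)
    refine ⟨g^[m] x₀, mk_mem_periodicPts (n := n - m) (by omega) ?_⟩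
    rw [IsPeriodicPt, IsFixedPt, ← iterate_add_apply, Nat.sub_add_cancel hlt.le, heq]
  obtain ⟨x, hx⟩ := hper
  let π : Perm α := Perm.ofSubtype ((bijOn_periodicPts g).equiv g)
  have hπ : ∀ y ∈ periodicPts g, π y = g y := fun y hy => Perm.ofSubtype_apply_of_mem _ hy
  refine ⟨π, ⟨x, hπ x hx⟩, fun y => ?_⟩
  by_cases hy : y ∈ periodicPts g
  · exact Or.inl (hπ y hy)
  · exact Or.inr (Perm.ofSubtype_apply_of_not_mem _ hy)

variable {ι : Type*} [Fintype ι]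

theorem sum_apply_perm_eq_sum_symm (S : Matrix ι ι ℝ) (σ : Perm ι) :
    ∑ i, S i (σ i) = ∑ k, S (σ.symm k) k := by
  rw [← σ.symm.sum_comp (fun i => S i (σ i))]
  simp only [apply_symm_apply]

theorem sum_apply_perm_le_of_forall {S : Matrix ι ι ℝ} {σ τ : Perm ι} (x : ι → ℝ)
    (h : ∀ k, x (σ.symm k) + S (σ.symm k) k ≤ x (τ.symm k) + S (τ.symm k) k) :
    ∑ i, S i (σ i) ≤ ∑ i, S i (τ i) := by
  have hx : ∀ π : Perm ι, ∑ k, x (π.symm k) = ∑ i, x i := fun π => π.symm.sum_comp x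
  have := sum_le_sum fun k (_ : k ∈ univ) => h k
  rw [sum_add_distrib, sum_add_distrib, hx, hx] at this
  rw [sum_apply_perm_eq_sum_symm, sum_apply_perm_eq_sum_symm]
  linarith

theorem TropDependent.not_tropNonsing {r : ℕ} [NeZero r] {S : Matrix (Fin r) (Fin r) ℝ}
    (h : TropDependent S) : ¬ TropNonsing S := by
  rintro ⟨σ₀, hσ₀, huniq⟩
  obtain ⟨x, hx⟩ := h
  choose f hf hfmin using fun k => (hx k).exists_ne (σ₀.symm k)
  -- Reassigning each column `k` on a cycle of `σ₀ ∘ f` to the row `f k` does not increase the cost.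
  obtain ⟨π, ⟨k₀, hk₀⟩, hπ⟩ := exists_perm_apply_eq_or_eq fun k => σ₀ (f k)
  let σ : Perm (Fin r) := (π.trans σ₀.symm).symm
  have hσ : ∀ k, σ.symm k = σ₀.symm (π k) := fun _ => rfl
  have hle : ∑ i, S i (σ i) ≤ ∑ i, S i (σ₀ i) := sum_apply_perm_le_of_forall x fun k => by
    rcases hπ k with h | h
    · rw [hσ, h, symm_apply_apply]
      exact hfmin k _
    · rw [hσ, h]
  have hσσ₀ : σ = σ₀ := huniq σ fun τ => hle.trans (hσ₀ τ)
  apply hf k₀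
  rw [← hσσ₀, hσ, hk₀, symm_apply_apply]

variable [DecidableEq ι]

theorem card_subtype_ne_lt (j : ι) : Fintype.card {c // c ≠ j} < Fintype.card ι :=
  Fintype.card_subtype_lt (p := (· ≠ j)) (not_not.mpr rfl)

/-- Its Cramer vector is the vector of tropical cofactors of `S` along the column `j`. -/
abbrev cofactorMatrix (S : Matrix ι ι ℝ) (j : ι) : Matrix {c // c ≠ j} ι ℝ :=
  Sᵀ.submatrix Subtype.val id

theorem cramerVec_cofactorMatrix_add_le (S : Matrix ι ι ℝ) (j : ι) (σ : Perm ι) :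
    cramerVec (cofactorMatrix S j) (σ.symm j) + S (σ.symm j) j ≤ ∑ i, S i (σ i) := by
  let φ : {c // c ≠ j} ↪ ι := (Embedding.subtype _).trans σ.symm.toEmbedding
  have hφ : σ.symm j ∉ Set.range φ := fun ⟨c, hc⟩ => c.2 (σ.symm.injective hc)
  have := cramerVec_le (cofactorMatrix S j) φ hφ
  rw [sum_apply_perm_eq_sum_symm, Fintype.sum_eq_add_sum_subtype_ne _ j]
  change _ ≤ ∑ c : {c // c ≠ j}, S (σ.symm c) c at this
  linarith

theorem exists_sum_apply_perm_le_cramerVec_cofactorMatrix_add (S : Matrix ι ι ℝ) (j i : ι) :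
    ∃ σ : Perm ι, ∑ i, S i (σ i) ≤ cramerVec (cofactorMatrix S j) i + S i j := by
  obtain ⟨φ, hφ, hsum⟩ := exists_eq_cramerVec (cofactorMatrix S j) (card_subtype_ne_lt j) i
  let ψ : ι → ι := fun c => if h : c = j then i else φ ⟨c, h⟩
  have hψ : Injective ψ := by
    intro c c' hcc'
    by_cases hc : c = j <;> by_cases hc' : c' = j <;> simp only [ψ, hc, hc', dif_pos, dif_neg,
      not_false_eq_true] at hcc'
    · exact hc.trans hc'.symm
    · exact absurd ⟨_, hcc'.symm⟩ hφ
    · exact absurd ⟨_, hcc'⟩ hφ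
    · exact congrArg Subtype.val (φ.injective hcc')
  refine ⟨(Equiv.ofBijective ψ (Finite.injective_iff_bijective.mp hψ)).symm, le_of_eq ?_⟩
  rw [sum_apply_perm_eq_sum_symm, Fintype.sum_eq_add_sum_subtype_ne _ j, ← hsum, add_comm]
  have hψc : ∀ c : {c // c ≠ j}, ψ c = φ c := fun c => dif_neg c.2
  simp only [symm_symm, ofBijective_apply, hψc]
  simp only [ψ, dif_pos]
  rfl

theorem tropDependent_of_not_tropNonsing {r : ℕ} {S : Matrix (Fin r) (Fin r) ℝ}
    (h : ¬ TropNonsing S) : TropDependent S := by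
  obtain ⟨σ₀, hσ₀⟩ := Finite.exists_min fun σ : Perm (Fin r) => ∑ i, S i (σ i)
  obtain ⟨σ₁, hσ₁, hne⟩ : ∃ σ₁ : Perm (Fin r),
      (∀ τ : Perm (Fin r), ∑ i, S i (σ₁ i) ≤ ∑ i, S i (τ i)) ∧ σ₁ ≠ σ₀ := by
    by_contra! hcon
    exact h ⟨σ₀, hσ₀, hcon⟩
  obtain ⟨j, hj⟩ := DFunLike.ne_iff.mp (symm_bijective.injective.ne hne)
  refine ⟨cramerVec (cofactorMatrix S j), fun k => ?_⟩
  by_cases hk : k = j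
  · subst hk
    -- The minimum over `i` of `cramerVec i + S i k` is the optimal cost, attained by `σ₀` and `σ₁`.
    have hopt : ∀ i, ∑ i, S i (σ₀ i) ≤ cramerVec (cofactorMatrix S k) i + S i k := fun i =>
      let ⟨σ, hσ⟩ := exists_sum_apply_perm_le_cramerVec_cofactorMatrix_add S k i
      (hσ₀ σ).trans hσ
    refine ⟨σ₁.symm k, σ₀.symm k, hj, fun i => ?_, fun i => ?_⟩
    · exact (cramerVec_cofactorMatrix_add_le S k σ₁).trans ((hσ₁ σ₀).trans (hopt i))
    · exact (cramerVec_cofactorMatrix_add_le S k σ₀).trans (hopt i)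
  · exact cramerVec_mem_tropHyperplane (cofactorMatrix S j) (card_subtype_ne_lt j) ⟨k, hk⟩

end Square

theorem le_untopD_add_of_le {l : WithTop ℝ} {a u v L : ℝ} (h : (a : WithTop ℝ) + u ≤ l + v)
    (hL : a + u ≤ L + v) : a + u ≤ l.untopD L + v := by
  induction l using WithTop.recTopCoe with
  | top => exact hL
  | coe b => exact_mod_cast h

section Realizes

variable {m n : ℕ} {M : Matrix (Fin m) (Fin n) ℝ}

theorem Realizes.tropDependent {lam : Fin m → WithTop ℝ} (h : Realizes lam M) :
    TropDependent M := by
  obtain ⟨⟨τ₀, hτ₀⟩, hties⟩ := h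
  choose t₁ t₂ hne h₁ h₂ using hties
  have hfin : ∀ k t, (∀ τ, lam t + M t k ≤ lam τ + M τ k) → lam t ≠ ⊤ := fun k t ht htop => by
    have := ht τ₀
    rw [htop, top_add, top_le_iff, WithTop.add_eq_top] at this
    exact this.elim hτ₀ WithTop.coe_ne_top
  -- Entries `⊤` of `lam` may be replaced by any real `L` exceeding every column minimum.
  obtain ⟨L, hL⟩ := (Set.finite_range fun p : Fin n × Fin m =>
    (lam (t₁ p.1)).untopD 0 + M (t₁ p.1) p.1 - M p.2 p.1).bddAbove
  have key : ∀ k t, (∀ τ, lam t + M t k ≤ lam τ + M τ k) →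
      ∀ τ, (lam t).untopD L + M t k ≤ (lam τ).untopD L + M τ k := by
    intro k t ht τ
    obtain ⟨a, ha⟩ := WithTop.ne_top_iff_exists.mp (hfin k t ht)
    obtain ⟨b, hb⟩ := WithTop.ne_top_iff_exists.mp (hfin k _ (h₁ k))
    have hab : a + M t k ≤ b + M (t₁ k) k := by
      have := ht (t₁ k)
      rw [← ha, ← hb] at this
      exact_mod_cast this
    have hbL : b + M (t₁ k) k - M τ k ≤ L := by
      simpa only [← hb, WithTop.untopD_coe] using hL ⟨(k, τ), rfl⟩
    rw [← ha, WithTop.untopD_coe]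
    exact le_untopD_add_of_le (ha ▸ ht τ) (by linarith)
  exact ⟨fun τ => (lam τ).untopD L, fun k => ⟨t₁ k, t₂ k, hne k, key k _ (h₁ k), key k _ (h₂ k)⟩⟩

theorem TropDependent.exists_realizes [NeZero m] (h : TropDependent M) :
    ∃ lam : Fin m → WithTop ℝ, Realizes lam M := by
  obtain ⟨x, hx⟩ := h
  refine ⟨fun τ => x τ, ⟨0, WithTop.coe_ne_top⟩, fun k => ?_⟩
  obtain ⟨i, j, hij, hi, hj⟩ := hx k
  simp only [Pi.add_apply, Matrix.transpose_apply] at hi hj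
  exact ⟨i, j, hij, fun τ => by dsimp only; exact_mod_cast hi τ,
    fun τ => by dsimp only; exact_mod_cast hj τ⟩

end Realizes

theorem tropDependent_of_forall_not_tropNonsing {r n : ℕ} [NeZero r]
    (M : Matrix (Fin r) (Fin n) ℝ)
    (h : ∀ γ : Fin r → Fin n, Injective γ → ¬ TropNonsing (M.submatrix id γ)) :
    TropDependent M := by
  suffices ∃ x, ∀ k ∈ univ, x ∈ tropHyperplane (Mᵀ k) from
    let ⟨x, hx⟩ := this
    ⟨x, fun k => hx k (mem_univ k)⟩
  refine exists_forall_mem_tropHyperplane Mᵀ univ fun G _ hG => ?_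
  rw [Fintype.card_fin] at hG
  rcases hG.lt_or_eq with hlt | hG
  · let X : Matrix G (Fin r) ℝ := fun k => Mᵀ k
    exact ⟨cramerVec X, fun k hk => cramerVec_mem_tropHyperplane X (by simpa using hlt) ⟨k, hk⟩⟩
  · obtain ⟨x, hx⟩ := tropDependent_of_not_tropNonsing (h _ (G.orderEmbOfFin hG).injective)
    refine ⟨x, fun k hk => ?_⟩
    obtain ⟨a, rfl⟩ : k ∈ Set.range (G.orderEmbOfFin hG) := by
      rwa [range_orderEmbOfFin]
    exact hx a

theorem tropRank_eq_max_indep_rows (m n : ℕ) (A : Matrix (Fin m) (Fin n) ℝ) :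
    tropRank A = sSup {c : ℕ | ∃ ρ : Fin c → Fin m, Function.Injective ρ ∧
      ¬ ∃ lam : Fin c → WithTop ℝ, Realizes lam (A.submatrix ρ id)} := by
  unfold tropRank
  congr 1
  ext r
  constructor
  · rintro ⟨ρ, γ, hρ, -, hγ⟩
    refine ⟨ρ, hρ, fun ⟨lam, hlam⟩ => ?_⟩
    have : NeZero r := NeZero.of_pos hlam.1.choose.pos
    exact (hlam.tropDependent.submatrix_cols γ).not_tropNonsing hγ
  · rintro ⟨ρ, hρ, hind⟩
    rcases Nat.eq_zero_or_pos r with rfl | hr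
    · exact ⟨ρ, Fin.elim0, hρ, fun a => a.elim0,
        ⟨1, fun _ => le_of_eq (by simp), fun _ _ => Subsingleton.elim _ _⟩⟩
    have : NeZero r := ⟨hr.ne'⟩
    by_contra hsing
    exact hind (tropDependent_of_forall_not_tropNonsing _ fun γ hγ hns =>
      hsing ⟨ρ, γ, hρ, hγ, hns⟩).exists_realizes

end
end

section
/- Let A be an m×n matrix over K all of whose entries are nonzero, and let (λ_1,…,λ_m) ∈ K^m be a nonzero vector such that Σ_{i=1}^m λ_i a_{ik} = 0 for every k ∈ {1,…,n}. Then the tuple (deg λ_1,…,deg λ_m) ∈ (ℝ∪{∞})^m realizes the tropical dependence of the rows of the real matrix deg A (whose (i,k) entry is deg a_{ik}). -/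
noncomputable section

/-! A vanishing finite sum of Hahn series cannot have a unique summand of least order: the
coefficient of the sum at that order would be the nonzero leading coefficient of that summand.
Since `deg` of a product is the sum of the degrees, the summands `λ_i a_ik` of the `k`-th
column relation have degrees `deg λ_i + deg a_ik`, so their minimum is attained twice. -/

namespace HahnSeries

variable {Γ R ι : Type*} [LinearOrder Γ] [AddCommMonoid R] [Fintype ι]

theorem exists_ne_orderTop_le_of_sum_eq_zero {f : ι → R⟦Γ⟧} (hsum : ∑ j, f j = 0) {i : ι}
    (hi : f i ≠ 0) : ∃ j, j ≠ i ∧ (f j).orderTop ≤ (f i).orderTop := by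
  by_contra! hlt
  set g := (f i).isWF_support.min (support_nonempty_iff.2 hi)
  have hg : (f i).orderTop = g := orderTop_of_ne_zero hi
  have hcoeff : (∑ j, f j).coeff g = (f i).coeff g := by
    rw [coeff_sum, Finset.sum_eq_single_of_mem i (Finset.mem_univ i)]
    exact fun j _ hj => coeff_eq_zero_of_lt_orderTop (hg ▸ hlt j hj)
  exact coeff_orderTop_ne hg (by rw [← hcoeff, hsum, coeff_zero])

theorem exists_two_minimizers_orderTop_of_sum_eq_zero {f : ι → R⟦Γ⟧} (hsum : ∑ j, f j = 0)
    (hf : f ≠ 0) : ∃ i j, i ≠ j ∧ (∀ l, (f i).orderTop ≤ (f l).orderTop) ∧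
      ∀ l, (f j).orderTop ≤ (f l).orderTop := by
  obtain ⟨l₀, hl₀⟩ := Function.ne_iff.mp hf
  have : Nonempty ι := ⟨l₀⟩
  obtain ⟨i, hi⟩ := Finite.exists_min fun l => (f l).orderTop
  have hfi : f i ≠ 0 :=
    orderTop_ne_top.mp (ne_top_of_le_ne_top (orderTop_ne_top.mpr hl₀) (hi l₀))
  obtain ⟨j, hji, hj⟩ := exists_ne_orderTop_le_of_sum_eq_zero hsum hfi
  exact ⟨i, j, hji.symm, hi, fun l => hj.trans (hi l)⟩

end HahnSeries

theorem Kdeg_eq_orderTop (a : K) : Kdeg a = a.orderTop := by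
  by_cases ha : a = 0
  · simp [Kdeg, ha]
  · simp [Kdeg, ha, HahnSeries.order_eq_orderTop_of_ne_zero ha]

theorem lin_dep_implies_trop_dep (m n : ℕ) (A : Matrix (Fin m) (Fin n) K)
    (hA : ∀ i k, A i k ≠ 0)
    (lam : Fin m → K) (hlam : lam ≠ 0)
    (hsum : ∀ k, ∑ i, lam i * A i k = 0)
    (dA : Matrix (Fin m) (Fin n) ℝ) (hdA : ∀ i k, Kdeg (A i k) = (dA i k : WithTop ℝ)) :
    Realizes (fun i => Kdeg (lam i)) dA := by
  obtain ⟨i₀, hi₀⟩ := Function.ne_iff.mp hlam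
  refine ⟨⟨i₀, by simpa [Kdeg_eq_orderTop] using hi₀⟩, fun k => ?_⟩
  have hdeg : ∀ i, Kdeg (lam i) + (dA i k : WithTop ℝ) = (lam i * A i k).orderTop := fun i => by
    rw [← hdA, Kdeg_eq_orderTop, Kdeg_eq_orderTop, HahnSeries.orderTop_mul]
  simp only [hdeg]
  exact HahnSeries.exists_two_minimizers_orderTop_of_sum_eq_zero (hsum k)
    (Function.ne_iff.mpr ⟨i₀, mul_ne_zero hi₀ (hA i₀ k)⟩)

end
end

section
/- Let a ∈ ℝ^m and let l ∈ K^m be a vector such that the tuple (deg l_1,…,deg l_m) realizes the tropical dependence of a, i.e. the minimum min_{j=1}^m (a_j + deg l_j) is attained for at least two indices j. Then there exist x_1,…,x_m ∈ K with deg x_j = a_j for every j ∈ {1,…,m} and Σ_{j=1}^m x_j l_j = 0. -/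
noncomputable section

/-!
Let `d` be the common value `a j₁ + deg l j₁ = a j₂ + deg l j₂` of the minimum. Take `x j = t ^ a j`
for `j ≠ j₁`, except that `x j₂ = c t ^ a j₂` with `c ∈ {1, 2}` chosen so that
`S = ∑_{j ≠ j₁} x j l j` keeps a term of degree `d`: if `c = 1` cancels it, `c = 2` cannot.
Then `x j₁ = -S / l j₁` has degree `d - deg l j₁ = a j₁` and the whole sum vanishes. If `l j₁ = 0`
the minimum is `∞`, so every `l j` vanishes and `x j = t ^ a j` works.
-/

namespace HahnSeries

theorem exists_orderTop_smul_add_eq {Γ R : Type*} [LinearOrder Γ] [Semiring R] [NeZero (2 : R)]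
    {u r : HahnSeries Γ R} (hur : u.orderTop ≤ r.orderTop) :
    ∃ c : R, c ≠ 0 ∧ (c • u + r).orderTop = u.orderTop := by
  by_cases h : (u + r).orderTop = u.orderTop
  · have one_ne : (1 : R) ≠ 0 := fun h₁ =>
      two_ne_zero (by rw [← one_add_one_eq_two, h₁, add_zero] : (2 : R) = 0)
    exact ⟨1, one_ne, by rwa [one_smul]⟩
  · have hlt : u.orderTop < (u + r).orderTop :=
      lt_of_le_of_ne (le_of_eq_of_le (min_eq_left hur).symm min_orderTop_le_orderTop_add) (Ne.symm h)
    refine ⟨2, two_ne_zero, ?_⟩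
    rw [two_smul, add_assoc, orderTop_add_eq_left hlt]

theorem le_orderTop_sum {Γ R ι : Type*} [LinearOrder Γ] [AddCommMonoid R] {s : Finset ι}
    {f : ι → HahnSeries Γ R} {g : WithTop Γ} (hf : ∀ i ∈ s, g ≤ (f i).orderTop) :
    g ≤ (∑ i ∈ s, f i).orderTop := by
  classical
  induction s using Finset.induction_on with
  | empty => simp
  | insert i s hi ih =>
    rw [Finset.sum_insert hi]
    exact le_trans (le_min (hf i (by simp)) (ih fun j hj => hf j (by simp [hj])))
      min_orderTop_le_orderTop_add

variable {Γ F : Type*} [AddCommGroup Γ] [LinearOrder Γ] [IsOrderedAddMonoid Γ] [Field F]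

theorem orderTop_div_eq {x y : HahnSeries Γ F} {g : Γ} (hy : y ≠ 0)
    (hx : x.orderTop = g + y.orderTop) : (x / y).orderTop = g := by
  rw [← div_mul_cancel₀ x hy, orderTop_mul] at hx
  exact WithTop.add_right_cancel (orderTop_ne_top.2 hy) hx

theorem orderTop_single_mul {g : Γ} {c : F} (hc : c ≠ 0) (y : HahnSeries Γ F) :
    (single g c * y).orderTop = g + y.orderTop := by
  rw [orderTop_mul, orderTop_single hc]

open Finset Function in
theorem exists_orderTop_eq_and_sum_mul_eq_zero [NeZero (2 : F)] {ι : Type*} [Fintype ι]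
    [DecidableEq ι] (a : ι → Γ) (l : ι → HahnSeries Γ F) {j₁ j₂ : ι} (hne : j₁ ≠ j₂)
    (h₁ : ∀ j, (a j₁ : WithTop Γ) + (l j₁).orderTop ≤ a j + (l j).orderTop)
    (h₂ : ∀ j, (a j₂ : WithTop Γ) + (l j₂).orderTop ≤ a j + (l j).orderTop) :
    ∃ x : ι → HahnSeries Γ F, (∀ j, (x j).orderTop = a j) ∧ ∑ j, x j * l j = 0 := by
  by_cases hl₁ : l j₁ = 0
  · have hl : ∀ j, l j = 0 := fun j => by simpa [hl₁] using h₁ j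
    exact ⟨fun j => single (a j) (1 : F), fun _ => orderTop_single (one_ne_zero (α := F)),
      by simp [hl]⟩
  have hl₂ : l j₂ ≠ 0 := fun h => by simpa [h, hl₁] using h₂ j₁
  have hd : (a j₁ : WithTop Γ) + (l j₁).orderTop = a j₂ + (l j₂).orderTop :=
    le_antisymm (h₁ j₂) (h₂ j₁)
  set u := single (a j₂) (1 : F) * l j₂
  set R := ∑ j ∈ (univ.erase j₁).erase j₂, single (a j) (1 : F) * l j
  have hu : u.orderTop = a j₂ + (l j₂).orderTop := orderTop_single_mul one_ne_zero _
  have huR : u.orderTop ≤ R.orderTop :=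
    le_orderTop_sum fun j _ => by rw [hu, orderTop_single_mul one_ne_zero]; exact h₂ j
  obtain ⟨c, hc, hS⟩ := exists_orderTop_smul_add_eq huR
  set S := c • u + R
  let y : ι → HahnSeries Γ F := fun j => single (a j) (if j = j₂ then c else 1)
  have hy : ∀ j, (y j).orderTop = a j := fun j => orderTop_single (by split_ifs <;> simp [hc])
  have hyS : ∑ j ∈ univ.erase j₁, y j * l j = S := by
    rw [← add_sum_erase _ _ (mem_erase.2 ⟨hne.symm, mem_univ _⟩)]
    congr 1
    · rw [← smul_mul_assoc]
      congr 1
      ext g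
      simp [y, coeff_single]
    · exact sum_congr rfl fun j hj => by simp [y, ne_of_mem_erase hj]
  refine ⟨update y j₁ (-(S / l j₁)), fun j => ?_, ?_⟩
  · rcases eq_or_ne j j₁ with rfl | hj
    · rw [update_self, orderTop_neg]
      exact orderTop_div_eq hl₁ (hS.trans (hu.trans hd.symm))
    · rw [update_of_ne hj, hy]
  · rw [← add_sum_erase _ _ (mem_univ j₁), update_self,
      sum_congr rfl fun j hj => by rw [update_of_ne (ne_of_mem_erase hj)], hyS, neg_mul,
      div_mul_cancel₀ _ hl₁, neg_add_cancel]

end HahnSeries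

theorem single_equation_solution (m : ℕ) (a : Fin m → ℝ) (l : Fin m → K)
    (h : ∃ j₁ j₂ : Fin m, j₁ ≠ j₂ ∧
      (∀ j, (a j₁ : WithTop ℝ) + Kdeg (l j₁) ≤ (a j : WithTop ℝ) + Kdeg (l j)) ∧
      (∀ j, (a j₂ : WithTop ℝ) + Kdeg (l j₂) ≤ (a j : WithTop ℝ) + Kdeg (l j))) :
    ∃ x : Fin m → K, (∀ j, Kdeg (x j) = (a j : WithTop ℝ)) ∧ ∑ j, x j * l j = 0 := by
  obtain ⟨j₁, j₂, hne, h₁, h₂⟩ := h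
  simp only [Kdeg_eq_orderTop] at h₁ h₂ ⊢
  exact HahnSeries.exists_orderTop_eq_and_sum_mul_eq_zero a l hne h₁ h₂

end
end

section
/- Let A ∈ ℝ^{m×n} and let B = P(A) be its pattern. Let 𝓘 ⊆ {1,…,m} be nonempty and let (λ_τ)_{τ∈𝓘}, with each λ_τ ∈ ℝ∪{∞} and not all equal to ∞, realize the tropical dependence of the rows of A indexed by 𝓘 (i.e. for every column k the minimum min_{τ∈𝓘} (λ_τ + a_{τk}) is attained for at least two indices τ ∈ 𝓘). Set I = {ρ ∈ 𝓘 : λ_ρ = min_{τ∈𝓘} λ_τ}. Then I realizes the 𝔹-tropical dependence of the rows of B, i.e. for every column k the cardinality of {i ∈ I : b_{ik} = 0} is different from 1. -/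
noncomputable section

/-!
Let `ρ` be the only row of `I` whose pattern entry in column `k` is `0`. Being minimal both in
`lam` over `𝓘` and in column `k`, `ρ` attains `min_{τ ∈ 𝓘} (lam τ + a_{τk})`, so the dependence
supplies a second minimiser `σ ≠ ρ`. Since `lam ρ` is finite, `lam σ + a_{σk} ≤ lam ρ + a_{ρk}`
together with `lam ρ ≤ lam σ` and `a_{ρk} ≤ a_{σk}` forces both to be equalities, so `σ` also lies
in `I` and has pattern entry `0`, a contradiction.
-/

theorem WithTop.eq_and_eq_of_add_le_add {α : Type*} [AddCommMonoid α] [LinearOrder α]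
    [IsOrderedCancelAddMonoid α] {a b : WithTop α} {c d : α} (hab : a ≤ b) (hcd : c ≤ d)
    (ha : a ≠ ⊤) (h : b + d ≤ a + c) : a = b ∧ c = d := by
  lift a to α using ha
  lift b to α using by rintro rfl; simp at h
  norm_cast at hab h ⊢
  exact (add_eq_add_iff_eq_and_eq hab hcd).mp (le_antisymm (add_le_add hab hcd) h)

theorem pat_eq_zero_iff {m n : ℕ} (A : Matrix (Fin m) (Fin n) ℝ) (u : Fin m) (v : Fin n) :
    pat A u v = 0 ↔ ∀ i, A u v ≤ A i v := by
  unfold pat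
  split_ifs with h <;> simp [h]

theorem pattern_bool_dependence_general (m n : ℕ) (A : Matrix (Fin m) (Fin n) ℝ)
    (𝓘 : Set (Fin m))
    (lam : Fin m → WithTop ℝ)
    (hne : ∃ τ ∈ 𝓘, lam τ ≠ ⊤)
    (hdep : ∀ k : Fin n, ∃ τ₁ ∈ 𝓘, ∃ τ₂ ∈ 𝓘, τ₁ ≠ τ₂ ∧
      (∀ τ ∈ 𝓘, lam τ₁ + (A τ₁ k : WithTop ℝ) ≤ lam τ + (A τ k : WithTop ℝ)) ∧
      (∀ τ ∈ 𝓘, lam τ₂ + (A τ₂ k : WithTop ℝ) ≤ lam τ + (A τ k : WithTop ℝ)))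
    (I : Set (Fin m)) (hI : I = {ρ ∈ 𝓘 | ∀ τ ∈ 𝓘, lam ρ ≤ lam τ}) :
    ∀ k : Fin n, ({i ∈ I | pat A i k = 0}).ncard ≠ 1 := by
  subst hI
  intro k hcard
  obtain ⟨ρ, hρ⟩ := Set.ncard_eq_one.mp hcard
  have hρmem : ρ ∈ {i ∈ {ρ ∈ 𝓘 | ∀ τ ∈ 𝓘, lam ρ ≤ lam τ} | pat A i k = 0} := hρ ▸ rfl
  obtain ⟨⟨hρ𝓘, hρmin⟩, hρpat⟩ := hρmem
  rw [pat_eq_zero_iff] at hρpat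
  obtain ⟨τ₀, hτ₀, hτ₀top⟩ := hne
  have hρtop : lam ρ ≠ ⊤ := ne_top_of_le_ne_top hτ₀top (hρmin τ₀ hτ₀)
  obtain ⟨σ, hσ𝓘, hσρ, hσmin⟩ : ∃ σ ∈ 𝓘, σ ≠ ρ ∧
      lam σ + (A σ k : WithTop ℝ) ≤ lam ρ + (A ρ k : WithTop ℝ) := by
    obtain ⟨τ₁, hτ₁, τ₂, hτ₂, h12, h₁, h₂⟩ := hdep k
    rcases eq_or_ne τ₁ ρ with rfl | h1ρ
    · exact ⟨τ₂, hτ₂, h12.symm, h₂ τ₁ hρ𝓘⟩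
    · exact ⟨τ₁, hτ₁, h1ρ, h₁ ρ hρ𝓘⟩
  obtain ⟨hlam, hA⟩ :=
    WithTop.eq_and_eq_of_add_le_add (hρmin σ hσ𝓘) (hρpat σ) hρtop hσmin
  have hσmem : σ ∈ {i ∈ {ρ ∈ 𝓘 | ∀ τ ∈ 𝓘, lam ρ ≤ lam τ} | pat A i k = 0} :=
    ⟨⟨hσ𝓘, hlam ▸ hρmin⟩, (pat_eq_zero_iff A σ k).mpr (hA ▸ hρpat)⟩
  rw [hρ] at hσmem
  exact hσρ hσmem

theorem pattern_bool_dependence (m n : ℕ) (A : Matrix (Fin m) (Fin n) ℝ)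
    (𝓘 : Set (Fin m)) (h𝓘 : 𝓘.Nonempty)
    (lam : Fin m → WithTop ℝ)
    (hne : ∃ τ ∈ 𝓘, lam τ ≠ ⊤)
    (hdep : ∀ k : Fin n, ∃ τ₁ ∈ 𝓘, ∃ τ₂ ∈ 𝓘, τ₁ ≠ τ₂ ∧
      (∀ τ ∈ 𝓘, lam τ₁ + (A τ₁ k : WithTop ℝ) ≤ lam τ + (A τ k : WithTop ℝ)) ∧
      (∀ τ ∈ 𝓘, lam τ₂ + (A τ₂ k : WithTop ℝ) ≤ lam τ + (A τ k : WithTop ℝ)))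
    (I : Set (Fin m)) (hI : I = {ρ ∈ 𝓘 | ∀ τ ∈ 𝓘, lam ρ ≤ lam τ}) :
    ∀ k : Fin n, ({i ∈ I | pat A i k = 0}).ncard ≠ 1 :=
  pattern_bool_dependence_general m n A 𝓘 lam hne hdep I hI

end
end

section
/- Let M ∈ ℝ^{4×n} be a matrix with tropical rank at most 3. Suppose that the column (0,∞,∞,∞)ᵀ appears as a column of the pattern P(M), that the last three rows of P(M) (rows 2, 3, 4) are pairwise distinct, and that every row of P(M) contains at least one 0. Then there exists a positive real number x such that the tuple (x,0,0,0) realizes the tropical dependence of the rows of M. -/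
noncomputable section

/- ====================  auxiliary lemmas  ==================== -/

lemma fin4cases : ∀ t : Fin 4, t = 0 ∨ t = 1 ∨ t = 2 ∨ t = 3 := by decide

set_option synthInstance.maxHeartbeats 1000000 in
set_option synthInstance.maxSize 2048 in
set_option maxHeartbeats 1000000 in
lemma four_mem : ∀ i u u' t : Fin 4, (0:Fin 4) ≠ i → (0:Fin 4) ≠ u → (0:Fin 4) ≠ u' →
    i ≠ u → i ≠ u' → u ≠ u' → (t = 0 ∨ t = i ∨ t = u ∨ t = u') := by decide

lemma tri (a b c : ℝ) :
    (a ≤ b ∧ a ≤ c ∧ a = b) ∨ (a ≤ c ∧ a ≤ b ∧ a = c) ∨ (b ≤ a ∧ b ≤ c ∧ b = c) ∨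
    (a < b ∧ a < c) ∨ (b < a ∧ b < c) ∨ (c < a ∧ c < b) := by
  rcases le_or_gt a b with h | h
  · rcases le_or_gt a c with h' | h'
    · rcases eq_or_lt_of_le h with he | hlt
      · exact Or.inl ⟨h, h', he⟩
      · rcases eq_or_lt_of_le h' with he' | hlt'
        · exact Or.inr (Or.inl ⟨h', h, he'⟩)
        · exact Or.inr (Or.inr (Or.inr (Or.inl ⟨hlt, hlt'⟩)))
    · exact Or.inr (Or.inr (Or.inr (Or.inr (Or.inr ⟨h', lt_of_lt_of_le h' h⟩))))
  · rcases le_or_gt b c with h' | h'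
    · rcases eq_or_lt_of_le h' with he | hlt
      · exact Or.inr (Or.inr (Or.inl ⟨h.le, h', he⟩))
      · exact Or.inr (Or.inr (Or.inr (Or.inr (Or.inl ⟨h, hlt⟩))))
    · exact Or.inr (Or.inr (Or.inr (Or.inr (Or.inr ⟨lt_trans h' h, h'⟩))))

lemma diagDom {k : ℕ} (S : Matrix (Fin k) (Fin k) ℝ) (A B : Fin k → ℝ)
    (hd : ∀ t, S t t = A t + B t)
    (ho : ∀ t s, t ≠ s → A t + B s < S t s) : TropNonsing S := by
  have hlt : ∀ τ : Equiv.Perm (Fin k), τ ≠ 1 → ∑ i, S i i < ∑ i, S i (τ i) := by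
    intro τ hτ
    obtain ⟨i0, hi0⟩ : ∃ i, τ i ≠ i := by
      by_contra h
      push_neg at h
      exact hτ (Equiv.ext h)
    have h1 : ∑ i, S i i = ∑ i, (A i + B (τ i)) := by
      rw [Finset.sum_congr rfl (fun i _ => hd i), Finset.sum_add_distrib,
        Finset.sum_add_distrib, Equiv.sum_comp τ B]
    rw [h1]
    refine Finset.sum_lt_sum (fun i _ => ?_) ⟨i0, Finset.mem_univ i0, ho i0 (τ i0) (Ne.symm hi0)⟩
    rcases eq_or_ne (τ i) i with h | h
    · rw [h, ← hd i]
    · exact (ho i (τ i) (Ne.symm h)).le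
  refine ⟨1, ?_, ?_⟩
  · intro τ
    simp only [Equiv.Perm.one_apply]
    rcases eq_or_ne τ 1 with rfl | h
    · simp [Equiv.Perm.one_apply]
    · exact (hlt τ h).le
  · intro σ hσ
    by_contra h
    have h2 := hσ 1
    simp only [Equiv.Perm.one_apply] at h2
    exact absurd h2 (not_le.mpr (hlt σ h))

lemma patdiff {n : ℕ} (M : Matrix (Fin 4) (Fin n) ℝ) (u u' : Fin 4)
    (h : (fun j => pat M u j) ≠ (fun j => pat M u' j)) :
    ∃ k, ((∀ t, M u k ≤ M t k) ∧ ∃ t, M t k < M u' k) ∨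
      ((∀ t, M u' k ≤ M t k) ∧ ∃ t, M t k < M u k) := by
  obtain ⟨k, hk⟩ := Function.ne_iff.mp h
  by_cases h1 : ∀ t, M u k ≤ M t k <;> by_cases h2 : ∀ t, M u' k ≤ M t k
  · exact absurd (by simp [pat, h1, h2]) hk
  · push_neg at h2
    exact ⟨k, Or.inl ⟨h1, h2⟩⟩
  · push_neg at h1
    exact ⟨k, Or.inr ⟨h2, h1⟩⟩
  · exact absurd (by simp [pat, h1, h2]) hk

lemma key {n : ℕ} (M : Matrix (Fin 4) (Fin n) ℝ) (htrop : tropRank M ≤ 3)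
    (i u u' : Fin 4) (x : ℝ)
    (h0i : (0:Fin 4) ≠ i) (h0u : (0:Fin 4) ≠ u) (h0u' : (0:Fin 4) ≠ u')
    (hiu : i ≠ u) (hiu' : i ≠ u') (huu' : u ≠ u')
    (v w c c' : Fin n) (hxpos : 0 < x)
    (hw : ∀ t : Fin 4, t ≠ 0 → x ≤ M t w - M 0 w)
    (hvx : M i v - M 0 v < x)
    (hvu : M i v < M u v) (hvu' : M i v < M u' v)
    (hc : ∀ t, M u c ≤ M t c)
    (hcn : ∃ t, M t c < M u' c)
    (hc' : ∀ t, M u' c' ≤ M t c') : False := by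
  have hs : M u c < M u' c := by
    obtain ⟨t, ht⟩ := hcn
    exact lt_of_le_of_lt (hc t) ht
  set L : ℝ := max (M i v - M 0 v) (max (M u c - M 0 c) (M u' c' - M 0 c')) with hLdef
  have hL1 : M i v - M 0 v ≤ L := le_max_left _ _
  have hL2 : M u c - M 0 c ≤ L := le_trans (le_max_left _ _) (le_max_right _ _)
  have hL3 : M u' c' - M 0 c' ≤ L := le_trans (le_max_right _ _) (le_max_right _ _)
  have hLx : L < x := by
    have g1 := hc 0
    have g2 := hc' 0
    exact max_lt hvx (max_lt (by linarith) (by linarith))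
  set ε : ℝ := min (min ((x - L)/4) ((M u v - M i v)/4))
      (min ((M u' v - M i v)/4) ((M u' c - M u c)/2)) with hεdef
  have hε1 : ε ≤ (x - L)/4 := le_trans (min_le_left _ _) (min_le_left _ _)
  have hε2 : ε ≤ (M u v - M i v)/4 := le_trans (min_le_left _ _) (min_le_right _ _)
  have hε3 : ε ≤ (M u' v - M i v)/4 := le_trans (min_le_right _ _) (min_le_left _ _)
  have hε4 : ε ≤ (M u' c - M u c)/2 := le_trans (min_le_right _ _) (min_le_right _ _)
  have hεpos : 0 < ε := by
    apply lt_min (lt_min (by linarith) (by linarith)) (lt_min (by linarith) (by linarith))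
  -- distinctness of the four columns
  have hwv : w ≠ v := by
    intro h
    have := hw i h0i.symm
    rw [h] at this
    linarith
  have hwc : w ≠ c := by
    intro h
    have h1 := hw u h0u.symm
    rw [h] at h1
    have := hc 0
    linarith
  have hwc' : w ≠ c' := by
    intro h
    have h1 := hw u' h0u'.symm
    rw [h] at h1
    have := hc' 0
    linarith
  have hvc : v ≠ c := by
    intro h
    have := hc i
    rw [← h] at this
    linarith
  have hvc' : v ≠ c' := by
    intro h
    have := hc' i
    rw [← h] at this
    linarith
  have hcc' : c ≠ c' := by
    intro h
    have := hc' u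
    rw [← h] at this
    linarith
  obtain ⟨γ, hγ0, hγi, hγu, hγu'⟩ :
      ∃ γ : Fin 4 → Fin n, γ 0 = w ∧ γ i = v ∧ γ u = c ∧ γ u' = c' := by
    refine ⟨fun t => if t = 0 then w else if t = i then v else if t = u then c else c',
      by simp, by simp [Ne.symm h0i], by simp [Ne.symm h0u, Ne.symm hiu],
      by simp [Ne.symm h0u', Ne.symm hiu', Ne.symm huu']⟩
  obtain ⟨A, hA0, hAi, hAu, hAu'⟩ :
      ∃ A : Fin 4 → ℝ, A 0 = 0 ∧ A i = L + ε ∧ A u = L + 2*ε ∧ A u' = L + 3*ε := by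
    refine ⟨fun t => if t = 0 then 0 else if t = i then L + ε else if t = u then L + 2*ε
      else L + 3*ε, by simp, by simp [Ne.symm h0i], by simp [Ne.symm h0u, Ne.symm hiu],
      by simp [Ne.symm h0u', Ne.symm hiu', Ne.symm huu']⟩
  obtain ⟨B, hB0, hBi, hBu, hBu'⟩ :
      ∃ B : Fin 4 → ℝ, B 0 = M 0 w ∧ B i = M i v - (L + ε) ∧ B u = M u c - (L + 2*ε) ∧
        B u' = M u' c' - (L + 3*ε) := by
    refine ⟨fun t => if t = 0 then M 0 w else if t = i then M i v - (L + ε)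
      else if t = u then M u c - (L + 2*ε) else M u' c' - (L + 3*ε),
      by simp, by simp [Ne.symm h0i], by simp [Ne.symm h0u, Ne.symm hiu],
      by simp [Ne.symm h0u', Ne.symm hiu', Ne.symm huu']⟩
  have hγinj : Function.Injective γ := by
    intro a b hab
    rcases four_mem i u u' a h0i h0u h0u' hiu hiu' huu' with h1|h1|h1|h1 <;>
      rcases four_mem i u u' b h0i h0u h0u' hiu hiu' huu' with h2|h2|h2|h2 <;>
      rw [h1, h2] at hab ⊢ <;>
      simp only [hγ0, hγi, hγu, hγu'] at hab <;>
      first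
        | rfl
        | exact absurd hab hwv | exact absurd hab.symm hwv
        | exact absurd hab hwc | exact absurd hab.symm hwc
        | exact absurd hab hwc' | exact absurd hab.symm hwc'
        | exact absurd hab hvc | exact absurd hab.symm hvc
        | exact absurd hab hvc' | exact absurd hab.symm hvc'
        | exact absurd hab hcc' | exact absurd hab.symm hcc'
  have hTN : TropNonsing (M.submatrix id γ) := by
    apply diagDom _ A B
    · intro t
      rcases four_mem i u u' t h0i h0u h0u' hiu hiu' huu' with h1|h1|h1|h1 <;>
        rw [h1] <;>
        simp only [Matrix.submatrix_apply, id_eq, hγ0, hγi, hγu, hγu', hA0, hAi, hAu, hAu',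
          hB0, hBi, hBu, hBu'] <;> ring
    · intro t s hts
      rcases four_mem i u u' t h0i h0u h0u' hiu hiu' huu' with h1|h1|h1|h1 <;>
        rcases four_mem i u u' s h0i h0u h0u' hiu hiu' huu' with h2|h2|h2|h2 <;>
        first
          | exact absurd (h1.trans h2.symm) hts
          | (rw [h1, h2]
             simp only [Matrix.submatrix_apply, id_eq, hγ0, hγi, hγu, hγu', hA0, hAi, hAu,
               hAu', hB0, hBi, hBu, hBu']
             linarith [hw i h0i.symm, hw u h0u.symm, hw u' h0u'.symm, hc i, hc' i, hc 0,
               hc' 0, hc' u])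
  have h4 : (4:ℕ) ∈ {r : ℕ | ∃ (ρ : Fin r → Fin 4) (c : Fin r → Fin n),
      Function.Injective ρ ∧ Function.Injective c ∧ TropNonsing (M.submatrix ρ c)} :=
    ⟨id, γ, Function.injective_id, hγinj, hTN⟩
  have hb : BddAbove {r : ℕ | ∃ (ρ : Fin r → Fin 4) (c : Fin r → Fin n),
      Function.Injective ρ ∧ Function.Injective c ∧ TropNonsing (M.submatrix ρ c)} := by
    refine ⟨4, ?_⟩
    rintro r ⟨ρ, cc, hρ, -, -⟩
    simpa using Fintype.card_le_of_injective ρ hρ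
  have h5 : (4:ℕ) ≤ tropRank M := le_csSup hb h4
  omega

lemma uniqueCase {n : ℕ} (M : Matrix (Fin 4) (Fin n) ℝ) (htrop : tropRank M ≤ 3)
    (i u u' : Fin 4) (x : ℝ)
    (h0i : (0:Fin 4) ≠ i) (h0u : (0:Fin 4) ≠ u) (h0u' : (0:Fin 4) ≠ u')
    (hiu : i ≠ u) (hiu' : i ≠ u') (huu' : u ≠ u')
    (w : Fin n) (hxpos : 0 < x)
    (hw : ∀ t : Fin 4, t ≠ 0 → x ≤ M t w - M 0 w)
    (hpat : (fun j => pat M u j) ≠ (fun j => pat M u' j))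
    (hru : ∃ j, u ∈ colSupp M j) (hru' : ∃ j, u' ∈ colSupp M j)
    (k : Fin n) (hvx : M i k - M 0 k < x)
    (hvu : M i k < M u k) (hvu' : M i k < M u' k) : False := by
  obtain ⟨k₀, hor⟩ := patdiff M u u' hpat
  rcases hor with ⟨h1, h2⟩ | ⟨h1, h2⟩
  · obtain ⟨cd, hcd⟩ := hru'
    exact key M htrop i u u' x h0i h0u h0u' hiu hiu' huu' k w k₀ cd hxpos hw hvx hvu hvu'
      h1 h2 hcd
  · obtain ⟨cd, hcd⟩ := hru
    exact key M htrop i u' u x h0i h0u' h0u hiu' hiu huu'.symm k w k₀ cd hxpos hw hvx hvu'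
      hvu h1 h2 hcd

theorem four_row_dependence (n : ℕ) (M : Matrix (Fin 4) (Fin n) ℝ)
    (htrop : tropRank M ≤ 3)
    (hcol : ∃ j, colSupp M j = ({0} : Set (Fin 4)))
    (h12 : (fun j => pat M 1 j) ≠ (fun j => pat M 2 j))
    (h13 : (fun j => pat M 1 j) ≠ (fun j => pat M 3 j))
    (h23 : (fun j => pat M 2 j) ≠ (fun j => pat M 3 j))
    (hrow : ∀ u : Fin 4, ∃ j, u ∈ colSupp M j) :
    ∃ x : ℝ, 0 < x ∧ Realizes ![(x : WithTop ℝ), 0, 0, 0] M := by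
  obtain ⟨j, hj⟩ := hcol
  have h0j : ∀ t, M 0 j ≤ M t j := by
    have h : (0 : Fin 4) ∈ colSupp M j := by rw [hj]; rfl
    exact h
  have hstrictj : ∀ t : Fin 4, t ≠ 0 → M 0 j < M t j := by
    intro t ht
    by_contra hcon
    push_neg at hcon
    have hmem : t ∈ colSupp M j := fun s => le_trans hcon (h0j s)
    rw [hj] at hmem
    exact ht hmem
  have hne : (Finset.univ : Finset (Fin n)).Nonempty := ⟨j, Finset.mem_univ j⟩
  obtain ⟨w, -, hwx⟩ := Finset.exists_mem_eq_sup' hne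
    (fun k => min (M 1 k - M 0 k) (min (M 2 k - M 0 k) (M 3 k - M 0 k)))
  set x : ℝ := min (M 1 w - M 0 w) (min (M 2 w - M 0 w) (M 3 w - M 0 w)) with hxdef
  have hle : ∀ k, min (M 1 k - M 0 k) (min (M 2 k - M 0 k) (M 3 k - M 0 k)) ≤ x := by
    intro k
    have h1 := Finset.le_sup'
      (f := fun k => min (M 1 k - M 0 k) (min (M 2 k - M 0 k) (M 3 k - M 0 k)))
      (Finset.mem_univ k)
    rw [hwx] at h1
    exact h1
  have hxpos : 0 < x := by
    refine lt_of_lt_of_le ?_ (hle j)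
    have g1 := hstrictj 1 (by decide)
    have g2 := hstrictj 2 (by decide)
    have g3 := hstrictj 3 (by decide)
    exact lt_min (by linarith) (lt_min (by linarith) (by linarith))
  have hw1 : x ≤ M 1 w - M 0 w := by rw [hxdef]; exact min_le_left _ _
  have hw2 : x ≤ M 2 w - M 0 w := by
    rw [hxdef]; exact le_trans (min_le_right _ _) (min_le_left _ _)
  have hw3 : x ≤ M 3 w - M 0 w := by
    rw [hxdef]; exact le_trans (min_le_right _ _) (min_le_right _ _)
  have hw' : ∀ t : Fin 4, t ≠ 0 → x ≤ M t w - M 0 w := by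
    intro t ht
    rcases fin4cases t with rfl|rfl|rfl|rfl
    · exact absurd rfl ht
    · exact hw1
    · exact hw2
    · exact hw3
  have e0 : (![(x : WithTop ℝ), 0, 0, 0]) 0 = (x : WithTop ℝ) := rfl
  have e1 : (![(x : WithTop ℝ), 0, 0, 0]) 1 = (0 : WithTop ℝ) := rfl
  have e2 : (![(x : WithTop ℝ), 0, 0, 0]) 2 = (0 : WithTop ℝ) := rfl
  have e3 : (![(x : WithTop ℝ), 0, 0, 0]) 3 = (0 : WithTop ℝ) := rfl
  refine ⟨x, hxpos, ⟨0, by rw [e0]; exact WithTop.coe_ne_top⟩, ?_⟩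
  intro k
  rcases tri (M 1 k - M 0 k) (M 2 k - M 0 k) (M 3 k - M 0 k) with h|h|h|h|h|h
  · -- tie rows 1, 2
    have hax : M 1 k - M 0 k ≤ x := by
      have h' := hle k
      rw [min_eq_left (le_min h.1 h.2.1)] at h'
      exact h'
    refine ⟨1, 2, by decide, ?_, ?_⟩ <;>
      (intro τ; rcases fin4cases τ with rfl|rfl|rfl|rfl <;>
        simp only [e0, e1, e2, e3, zero_add, ← WithTop.coe_add, WithTop.coe_le_coe] <;>
        linarith [h.1, h.2.1, h.2.2, hax])
  · -- tie rows 1, 3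
    have hax : M 1 k - M 0 k ≤ x := by
      have h' := hle k
      rw [min_eq_left (le_min h.2.1 h.1)] at h'
      exact h'
    refine ⟨1, 3, by decide, ?_, ?_⟩ <;>
      (intro τ; rcases fin4cases τ with rfl|rfl|rfl|rfl <;>
        simp only [e0, e1, e2, e3, zero_add, ← WithTop.coe_add, WithTop.coe_le_coe] <;>
        linarith [h.1, h.2.1, h.2.2, hax])
  · -- tie rows 2, 3
    have hax : M 2 k - M 0 k ≤ x := by
      have h' := hle k
      rw [min_eq_left h.2.1, min_eq_right h.1] at h'
      exact h'
    refine ⟨2, 3, by decide, ?_, ?_⟩ <;>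
      (intro τ; rcases fin4cases τ with rfl|rfl|rfl|rfl <;>
        simp only [e0, e1, e2, e3, zero_add, ← WithTop.coe_add, WithTop.coe_le_coe] <;>
        linarith [h.1, h.2.1, h.2.2, hax])
  · -- unique argmin row 1
    have hax : M 1 k - M 0 k ≤ x := by
      have h' := hle k
      rw [min_eq_left (le_min h.1.le h.2.le)] at h'
      exact h'
    rcases hax.lt_or_eq with hlt | heq
    · exact absurd (uniqueCase M htrop 1 2 3 x (by decide) (by decide) (by decide) (by decide)
        (by decide) (by decide) w hxpos hw' h23 (hrow 2) (hrow 3) k hlt (by linarith)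
        (by linarith)) not_false
    · refine ⟨0, 1, by decide, ?_, ?_⟩ <;>
        (intro τ; rcases fin4cases τ with rfl|rfl|rfl|rfl <;>
          simp only [e0, e1, e2, e3, zero_add, ← WithTop.coe_add, WithTop.coe_le_coe] <;>
          linarith [h.1, h.2, heq])
  · -- unique argmin row 2
    have hax : M 2 k - M 0 k ≤ x := by
      have h' := hle k
      rw [min_eq_left h.2.le, min_eq_right h.1.le] at h'
      exact h'
    rcases hax.lt_or_eq with hlt | heq
    · exact absurd (uniqueCase M htrop 2 1 3 x (by decide) (by decide) (by decide) (by decide)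
        (by decide) (by decide) w hxpos hw' h13 (hrow 1) (hrow 3) k hlt (by linarith)
        (by linarith)) not_false
    · refine ⟨0, 2, by decide, ?_, ?_⟩ <;>
        (intro τ; rcases fin4cases τ with rfl|rfl|rfl|rfl <;>
          simp only [e0, e1, e2, e3, zero_add, ← WithTop.coe_add, WithTop.coe_le_coe] <;>
          linarith [h.1, h.2, heq])
  · -- unique argmin row 3
    have hax : M 3 k - M 0 k ≤ x := by
      have h' := hle k
      rw [min_eq_right h.2.le, min_eq_right h.1.le] at h'
      exact h'
    rcases hax.lt_or_eq with hlt | heq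
    · exact absurd (uniqueCase M htrop 3 1 2 x (by decide) (by decide) (by decide) (by decide)
        (by decide) (by decide) w hxpos hw' h12 (hrow 1) (hrow 2) k hlt (by linarith)
        (by linarith)) not_false
    · refine ⟨0, 3, by decide, ?_, ?_⟩ <;>
        (intro τ; rcases fin4cases τ with rfl|rfl|rfl|rfl <;>
          simp only [e0, e1, e2, e3, zero_add, ← WithTop.coe_add, WithTop.coe_le_coe] <;>
          linarith [h.1, h.2, heq])

end
end
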